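/- arXiv:1501.02009 — 4 statements merged into one kernel-verified Lean document; each statement's English description precedes it below -/
import Mathlib

section
/- A nonzero non-negative sin^k-concave function f on [0,τ] (with τ > 0) attaining its maximum at 0 satisfies τ ≤ π/2, and for all ε ≤ π/2: (∫_0^{min{ε,τ}} f(t)dt) / (∫_0^τ f(t)dt) ≥ (∫_0^ε cos^k(t)dt) / (∫_0^{π/2} cos^k(t)dt). -/
/-!
Write `g = f ^ (1 / k)`. Sin-concavity of `g` along the chord from `0` to `t` through `s` reads
`sin (t - s) g 0 + sin s g t ≤ sin t g s`. With `g s ≤ g 0` this rules out `τ > π / 2`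
(take `s = τ - π / 2`) and, letting `s → 0⁺`, gives `g t ≤ g 0 cos t`; fed back into the chord
inequality, that bound shows `g / cos`, hence `f / cos ^ k`, is non-increasing on `[0, τ]`.
The ratio inequality is then Chebyshev's inequality for the non-increasing function
`f / cos ^ k`, extended by `0` past `τ`, against the weight `cos ^ k` on `[0, π / 2]`.
-/

open Real

def SinPowConcaveOn (k : ℕ) (I : Set ℝ) (f : ℝ → ℝ) : Prop :=
  ∀ x₁ ∈ I, ∀ x₂ ∈ I, ∀ α ∈ Set.Ioo (0 : ℝ) 1,
    f (α * x₁ + (1 - α) * x₂) ^ ((k : ℝ)⁻¹) ≥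
      (Real.sin (α * |x₂ - x₁|) / Real.sin |x₂ - x₁|) * f x₁ ^ ((k : ℝ)⁻¹) +
      (Real.sin ((1 - α) * |x₂ - x₁|) / Real.sin |x₂ - x₁|) * f x₂ ^ ((k : ℝ)⁻¹)

open Set Filter Topology MeasureTheory intervalIntegral

lemma SinPowConcaveOn.sin_mul_add_sin_mul_le {k : ℕ} {I : Set ℝ} {f : ℝ → ℝ}
    (hf : SinPowConcaveOn k I f) {a s t : ℝ} (ha : a ∈ I) (ht : t ∈ I) (has : a < s)
    (hst : s < t) (hta : t - a < π) :
    sin (t - s) * f a ^ (k : ℝ)⁻¹ + sin (s - a) * f t ^ (k : ℝ)⁻¹ ≤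
      sin (t - a) * f s ^ (k : ℝ)⁻¹ := by
  have hta0 : 0 < t - a := by linarith
  have hα : (t - s) / (t - a) ∈ Ioo (0 : ℝ) 1 :=
    ⟨div_pos (by linarith) hta0, (div_lt_one hta0).mpr (by linarith)⟩
  have h := hf a ha t ht _ hα
  have hpt : (t - s) / (t - a) * a + (1 - (t - s) / (t - a)) * t = s := by
    field_simp; ring
  have h₁ : (t - s) / (t - a) * (t - a) = t - s := by field_simp
  have h₂ : (1 - (t - s) / (t - a)) * (t - a) = s - a := by field_simp; ring
  rw [hpt, abs_of_pos hta0, h₁, h₂, ge_iff_le, div_mul_eq_mul_div, div_mul_eq_mul_div,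
    ← add_div, div_le_iff₀ (sin_pos_of_pos_of_lt_pi hta0 hta)] at h
  linarith

lemma one_sub_cos_eq_tan_half_mul_sin {x : ℝ} (hx : cos (x / 2) ≠ 0) :
    1 - cos x = tan (x / 2) * sin x := by
  have hx2 : x = 2 * (x / 2) := by ring
  rw [hx2, cos_two_mul', sin_two_mul, tan_eq_sin_div_cos, ← hx2]
  field_simp
  nlinarith [sin_sq_add_cos_sq (x / 2)]

theorem integral_mul_le_integral_mul_of_antitoneOn {F w : ℝ → ℝ} {a c b : ℝ} (hac : a ≤ c)
    (hcb : c ≤ b) (hF : AntitoneOn F (Icc a b)) (hw : ContinuousOn w (Icc a b))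
    (hw₀ : ∀ x ∈ Icc a b, 0 ≤ w x) :
    (∫ x in a..c, w x) * ∫ x in a..b, F x * w x ≤
      (∫ x in a..c, F x * w x) * ∫ x in a..b, w x := by
  have hab := hac.trans hcb
  have hFw : IntervalIntegrable (fun x => F x * w x) volume a b :=
    (AntitoneOn.intervalIntegrable (by rwa [uIcc_of_le hab])).mul_continuousOn
      (by rwa [uIcc_of_le hab])
  have hwi : IntervalIntegrable w volume a b := hw.intervalIntegrable_of_Icc hab
  have hsub₁ : uIcc a c ⊆ uIcc a b := by
    rw [uIcc_of_le hac, uIcc_of_le hab]; exact Icc_subset_Icc le_rfl hcb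
  have hsub₂ : uIcc c b ⊆ uIcc a b := by
    rw [uIcc_of_le hcb, uIcc_of_le hab]; exact Icc_subset_Icc hac le_rfl
  have hlow : F c * ∫ x in a..c, w x ≤ ∫ x in a..c, F x * w x := by
    rw [← intervalIntegral.integral_const_mul]
    refine integral_mono_on hac ((hwi.mono_set hsub₁).const_mul _) (hFw.mono_set hsub₁)
      fun x hx => mul_le_mul_of_nonneg_right ?_ (hw₀ x ⟨hx.1, hx.2.trans hcb⟩)
    exact hF ⟨hx.1, hx.2.trans hcb⟩ ⟨hac, hcb⟩ hx.2
  have hup : ∫ x in c..b, F x * w x ≤ F c * ∫ x in c..b, w x := by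
    rw [← intervalIntegral.integral_const_mul]
    refine integral_mono_on hcb (hFw.mono_set hsub₂) ((hwi.mono_set hsub₂).const_mul _)
      fun x hx => mul_le_mul_of_nonneg_right ?_ (hw₀ x ⟨hac.trans hx.1, hx.2⟩)
    exact hF ⟨hac, hcb⟩ ⟨hac.trans hx.1, hx.2⟩ hx.1
  have hW₁ : 0 ≤ ∫ x in a..c, w x :=
    integral_nonneg hac fun x hx => hw₀ x ⟨hx.1, hx.2.trans hcb⟩
  have hW₂ : 0 ≤ ∫ x in c..b, w x :=
    integral_nonneg hcb fun x hx => hw₀ x ⟨hac.trans hx.1, hx.2⟩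
  rw [← integral_add_adjacent_intervals (hFw.mono_set hsub₁) (hFw.mono_set hsub₂),
    ← integral_add_adjacent_intervals (hwi.mono_set hsub₁) (hwi.mono_set hsub₂)]
  nlinarith [mul_le_mul_of_nonneg_left hup hW₁, mul_le_mul_of_nonneg_right hlow hW₂]

section MaxAtZero

variable {k : ℕ} {τ : ℝ} {f : ℝ → ℝ}

lemma SinPowConcaveOn.le_pi_div_two (hf : SinPowConcaveOn k (Icc 0 τ) f) (hτπ : τ < π)
    (hpos : ∀ x ∈ Icc 0 τ, 0 ≤ f x) (hmax : ∀ x ∈ Icc 0 τ, f x ≤ f 0) (hf0 : 0 < f 0) :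
    τ ≤ π / 2 := by
  by_contra! hτ
  have hs : τ - π / 2 ∈ Icc 0 τ := ⟨by linarith, by linarith [pi_pos]⟩
  have h := hf.sin_mul_add_sin_mul_le (s := τ - π / 2) ⟨le_rfl, by linarith [pi_pos]⟩
    ⟨by linarith [pi_pos], le_rfl⟩ (by linarith) (by linarith [pi_pos]) (by simpa using hτπ)
  rw [sub_sub_cancel, sin_pi_div_two, sub_zero, sub_zero] at h
  have hsinτ : sin τ < 1 := by
    nlinarith [sin_sq_add_cos_sq τ, sin_le_one τ,
      cos_neg_of_pi_div_two_lt_of_lt hτ (by linarith)]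
  have hg0 : 0 < f 0 ^ (k : ℝ)⁻¹ := rpow_pos_of_pos hf0 _
  have hgs : f (τ - π / 2) ^ (k : ℝ)⁻¹ ≤ f 0 ^ (k : ℝ)⁻¹ :=
    rpow_le_rpow (hpos _ hs) (hmax _ hs) (by positivity)
  nlinarith [mul_nonneg (sin_nonneg_of_nonneg_of_le_pi hs.1 (by linarith))
    (rpow_nonneg (hpos τ ⟨by linarith [pi_pos], le_rfl⟩) (k : ℝ)⁻¹),
    mul_le_mul_of_nonneg_left hgs (sin_nonneg_of_nonneg_of_le_pi (by linarith) hτπ.le)]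

lemma SinPowConcaveOn.pos_of_mem_Ioo (hf : SinPowConcaveOn k (Icc 0 τ) f) (hk : k ≠ 0)
    (hτπ : τ < π) (hpos : ∀ x ∈ Icc 0 τ, 0 ≤ f x) (hf0 : 0 < f 0) {s : ℝ} (hs : s ∈ Ioo 0 τ) :
    0 < f s := by
  have hτ : 0 < τ := hs.1.trans hs.2
  have h := hf.sin_mul_add_sin_mul_le ⟨le_rfl, hτ.le⟩ ⟨hτ.le, le_rfl⟩ hs.1 hs.2
    (by simpa using hτπ)
  rw [sub_zero, sub_zero] at h
  have hgs : 0 < f s ^ (k : ℝ)⁻¹ := by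
    refine pos_of_mul_pos_right (lt_of_lt_of_le ?_ h) (sin_nonneg_of_nonneg_of_le_pi hτ.le hτπ.le)
    have := mul_pos (sin_pos_of_pos_of_lt_pi (sub_pos.2 hs.2) (by linarith [hs.1]))
      (rpow_pos_of_pos hf0 (k : ℝ)⁻¹)
    have := mul_nonneg (sin_nonneg_of_nonneg_of_le_pi hs.1.le (by linarith [hs.2]))
      (rpow_nonneg (hpos τ ⟨hτ.le, le_rfl⟩) (k : ℝ)⁻¹)
    linarith
  refine (hpos s ⟨hs.1.le, hs.2.le⟩).lt_of_ne fun h0 => ?_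
  rw [← h0, zero_rpow (by positivity)] at hgs
  exact hgs.false

lemma SinPowConcaveOn.rpow_inv_le_mul_cos (hf : SinPowConcaveOn k (Icc 0 τ) f) (hτπ : τ < π)
    (hpos : ∀ x ∈ Icc 0 τ, 0 ≤ f x) (hmax : ∀ x ∈ Icc 0 τ, f x ≤ f 0) {t : ℝ}
    (ht : t ∈ Icc 0 τ) : f t ^ (k : ℝ)⁻¹ ≤ f 0 ^ (k : ℝ)⁻¹ * cos t := by
  rcases ht.1.eq_or_lt with rfl | ht0
  · simp
  set g₀ := f 0 ^ (k : ℝ)⁻¹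
  have hbound : ∀ s ∈ Ioo 0 t, f t ^ (k : ℝ)⁻¹ ≤ g₀ * cos t + g₀ * sin t * tan (s / 2) := by
    rintro s ⟨hs0, hst⟩
    have hs : s ∈ Icc 0 τ := ⟨hs0.le, hst.le.trans ht.2⟩
    have h := hf.sin_mul_add_sin_mul_le ⟨le_rfl, ht.1.trans ht.2⟩ ht hs0 hst (by linarith [ht.2])
    rw [sub_zero, sub_zero, sin_sub] at h
    have hgs := mul_le_mul_of_nonneg_left
      (rpow_le_rpow (hpos s hs) (hmax s hs) (by positivity) : f s ^ (k : ℝ)⁻¹ ≤ g₀)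
      (sin_nonneg_of_nonneg_of_le_pi ht.1 (by linarith [ht.2]))
    have hhalf := one_sub_cos_eq_tan_half_mul_sin
      (cos_pos_of_mem_Ioo (x := s / 2) ⟨by linarith [pi_pos], by linarith [ht.2]⟩).ne'
    have hsins : 0 < sin s := sin_pos_of_pos_of_lt_pi hs0 (by linarith [ht.2])
    refine le_of_mul_le_mul_left ?_ hsins
    have : sin s * (g₀ * cos t + g₀ * sin t * tan (s / 2)) =
        g₀ * (cos t * sin s) + g₀ * sin t * (1 - cos s) := by rw [hhalf]; ring
    linarith
  have hlim : Tendsto (fun s => g₀ * cos t + g₀ * sin t * tan (s / 2)) (𝓝[>] 0)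
      (𝓝 (g₀ * cos t)) := by
    have hcont : ContinuousAt (fun s : ℝ => g₀ * cos t + g₀ * sin t * tan (s / 2)) 0 :=
      continuousAt_const.add (continuousAt_const.mul
        ((continuousAt_tan.2 (by simp)).comp (continuousAt_id.div_const 2)))
    simpa using hcont.tendsto.mono_left nhdsWithin_le_nhds
  exact ge_of_tendsto hlim (eventually_of_mem (Ioo_mem_nhdsGT ht0) hbound)

lemma SinPowConcaveOn.rpow_inv_mul_cos_le (hf : SinPowConcaveOn k (Icc 0 τ) f)
    (hτ : τ ≤ π / 2) (hpos : ∀ x ∈ Icc 0 τ, 0 ≤ f x) (hmax : ∀ x ∈ Icc 0 τ, f x ≤ f 0)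
    {s t : ℝ} (hs : 0 ≤ s) (hst : s ≤ t) (ht : t ≤ τ) :
    f t ^ (k : ℝ)⁻¹ * cos s ≤ f s ^ (k : ℝ)⁻¹ * cos t := by
  have hτπ : τ < π := hτ.trans_lt (by linarith [pi_pos])
  rcases hst.eq_or_lt with rfl | hst
  · exact le_rfl
  rcases hs.eq_or_lt with rfl | hs
  · simpa [mul_comm] using hf.rpow_inv_le_mul_cos hτπ hpos hmax ⟨hst.le, ht⟩
  have hcos : f t ^ (k : ℝ)⁻¹ ≤ f 0 ^ (k : ℝ)⁻¹ * cos t :=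
    hf.rpow_inv_le_mul_cos hτπ hpos hmax ⟨(hs.trans hst).le, ht⟩
  have h := hf.sin_mul_add_sin_mul_le ⟨le_rfl, hs.le.trans (hst.le.trans ht)⟩
    ⟨(hs.trans hst).le, ht⟩ hs hst (by linarith)
  rw [sub_zero, sub_zero] at h
  have h₁ := mul_le_mul_of_nonneg_right h
    (cos_nonneg_of_mem_Icc ⟨by linarith [pi_pos], ht.trans hτ⟩)
  have h₂ := mul_le_mul_of_nonneg_left hcos
    (sin_nonneg_of_nonneg_of_le_pi (sub_nonneg.2 hst.le) (by linarith [pi_pos]))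
  rw [sin_sub] at h₁ h₂
  refine le_of_mul_le_mul_left ?_ (sin_pos_of_pos_of_lt_pi (hs.trans hst) (by linarith))
  linarith

lemma SinPowConcaveOn.mul_cos_pow_le (hf : SinPowConcaveOn k (Icc 0 τ) f) (hk : k ≠ 0)
    (hτ : τ ≤ π / 2) (hpos : ∀ x ∈ Icc 0 τ, 0 ≤ f x) (hmax : ∀ x ∈ Icc 0 τ, f x ≤ f 0)
    {s t : ℝ} (hs : 0 ≤ s) (hst : s ≤ t) (ht : t ≤ τ) :
    f t * cos s ^ k ≤ f s * cos t ^ k := by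
  have hft := hpos t ⟨hs.trans hst, ht⟩
  have h := pow_le_pow_left₀
    (mul_nonneg (rpow_nonneg hft _) (cos_nonneg_of_mem_Icc ⟨by linarith [pi_pos], by linarith⟩))
    (hf.rpow_inv_mul_cos_le hτ hpos hmax hs hst ht) k
  rwa [mul_pow, mul_pow, rpow_inv_natCast_pow hft hk,
    rpow_inv_natCast_pow (hpos s ⟨hs, hst.trans ht⟩) hk] at h

-- At `t = π / 2 ≤ τ` this divides by `0`; harmless, since `f (π / 2) = 0` there.
noncomputable def truncDivCosPow (k : ℕ) (τ : ℝ) (f : ℝ → ℝ) (t : ℝ) : ℝ :=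
  if t ≤ τ then f t / cos t ^ k else 0

lemma SinPowConcaveOn.truncDivCosPow_mul_cos_pow (hf : SinPowConcaveOn k (Icc 0 τ) f)
    (hk : k ≠ 0) (hτ : τ ≤ π / 2) (hpos : ∀ x ∈ Icc 0 τ, 0 ≤ f x)
    (hmax : ∀ x ∈ Icc 0 τ, f x ≤ f 0) {t : ℝ} (ht : t ∈ Icc 0 τ) :
    truncDivCosPow k τ f t * cos t ^ k = f t := by
  rw [truncDivCosPow, if_pos ht.2]
  by_cases hc : cos t ^ k = 0
  · have h := hf.mul_cos_pow_le hk hτ hpos hmax le_rfl ht.1 ht.2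
    rw [hc, cos_zero, one_pow, mul_one, mul_zero] at h
    rw [hc, mul_zero]
    exact (h.antisymm (hpos t ht)).symm
  · exact div_mul_cancel₀ _ hc

lemma SinPowConcaveOn.antitoneOn_truncDivCosPow (hf : SinPowConcaveOn k (Icc 0 τ) f)
    (hk : k ≠ 0) (hτ : τ ≤ π / 2) (hpos : ∀ x ∈ Icc 0 τ, 0 ≤ f x)
    (hmax : ∀ x ∈ Icc 0 τ, f x ≤ f 0) :
    AntitoneOn (truncDivCosPow k τ f) (Icc 0 (π / 2)) := by
  have hnonneg : ∀ t ∈ Icc 0 (π / 2), 0 ≤ truncDivCosPow k τ f t := by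
    intro t ht
    unfold truncDivCosPow
    split_ifs with htτ
    · exact div_nonneg (hpos t ⟨ht.1, htτ⟩)
        (pow_nonneg (cos_nonneg_of_mem_Icc ⟨by linarith [pi_pos, ht.1], ht.2⟩) k)
    · exact le_rfl
  intro a ha b hb hab
  by_cases hbτ : b ≤ τ
  · by_cases hcb : cos b ^ k = 0
    · simpa [truncDivCosPow, hbτ, hcb] using hnonneg a ha
    have hcb : 0 < cos b ^ k :=
      (pow_nonneg (cos_nonneg_of_mem_Icc ⟨by linarith [pi_pos, hb.1], hb.2⟩) k).lt_of_ne' hcb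
    have hca : 0 < cos a ^ k := hcb.trans_le <| pow_le_pow_left₀
      (cos_nonneg_of_mem_Icc ⟨by linarith [pi_pos, hb.1], hb.2⟩)
      (cos_le_cos_of_nonneg_of_le_pi ha.1 (by linarith [pi_pos, hb.2]) hab) k
    rw [truncDivCosPow, truncDivCosPow, if_pos hbτ, if_pos (hab.trans hbτ),
      div_le_div_iff₀ hcb hca]
    exact hf.mul_cos_pow_le hk hτ hpos hmax ha.1 hab hbτ
  · simpa [truncDivCosPow, hbτ] using hnonneg a ha

lemma SinPowConcaveOn.intervalIntegrable_truncDivCosPow_mul_cos_pow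
    (hf : SinPowConcaveOn k (Icc 0 τ) f) (hk : k ≠ 0) (hτ : τ ≤ π / 2)
    (hpos : ∀ x ∈ Icc 0 τ, 0 ≤ f x) (hmax : ∀ x ∈ Icc 0 τ, f x ≤ f 0) :
    IntervalIntegrable (fun t => truncDivCosPow k τ f t * cos t ^ k) volume 0 (π / 2) := by
  refine AntitoneOn.intervalIntegrable ?_ |>.mul_continuousOn (continuous_cos.pow k).continuousOn
  rw [uIcc_of_le pi_div_two_pos.le]
  exact hf.antitoneOn_truncDivCosPow hk hτ hpos hmax

lemma SinPowConcaveOn.integral_truncDivCosPow_mul_cos_pow (hf : SinPowConcaveOn k (Icc 0 τ) f)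
    (hk : k ≠ 0) (hτ₀ : 0 ≤ τ) (hτ : τ ≤ π / 2) (hpos : ∀ x ∈ Icc 0 τ, 0 ≤ f x)
    (hmax : ∀ x ∈ Icc 0 τ, f x ≤ f 0) {x : ℝ} (hx : x ∈ Icc 0 (π / 2)) :
    ∫ t in 0..x, truncDivCosPow k τ f t * cos t ^ k = ∫ t in 0..min x τ, f t := by
  have heq : ∀ {y}, 0 ≤ y → y ≤ τ →
      ∫ t in 0..y, truncDivCosPow k τ f t * cos t ^ k = ∫ t in 0..y, f t :=
    fun hy hyτ => integral_congr fun t ht => by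
      rw [uIcc_of_le hy] at ht
      exact hf.truncDivCosPow_mul_cos_pow hk hτ hpos hmax ⟨ht.1, ht.2.trans hyτ⟩
  rcases le_total x τ with hxτ | hτx
  · rw [min_eq_left hxτ, heq hx.1 hxτ]
  have hint := hf.intervalIntegrable_truncDivCosPow_mul_cos_pow hk hτ hpos hmax
  have hzero : ∫ t in τ..x, truncDivCosPow k τ f t * cos t ^ k = 0 := by
    refine (intervalIntegral.integral_congr_ae (Eventually.of_forall fun t ht => ?_)).trans
      integral_zero
    rw [uIoc_of_le hτx] at ht
    simp [truncDivCosPow, not_le.2 ht.1]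
  rw [min_eq_right hτx, ← integral_add_adjacent_intervals (hint.mono_set ?_) (hint.mono_set ?_),
    hzero, add_zero, heq hτ₀ le_rfl]
  · rw [uIcc_of_le hτ₀, uIcc_of_le pi_div_two_pos.le]; exact Icc_subset_Icc le_rfl hτ
  · rw [uIcc_of_le hτx, uIcc_of_le pi_div_two_pos.le]; exact Icc_subset_Icc hτ₀ hx.2

lemma SinPowConcaveOn.integral_pos (hf : SinPowConcaveOn k (Icc 0 τ) f)
    (hk : k ≠ 0) (hτ₀ : 0 < τ) (hτ : τ ≤ π / 2) (hpos : ∀ x ∈ Icc 0 τ, 0 ≤ f x)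
    (hmax : ∀ x ∈ Icc 0 τ, f x ≤ f 0) (hf0 : 0 < f 0) : 0 < ∫ t in 0..τ, f t := by
  have hint : IntervalIntegrable f volume 0 τ := by
    refine (hf.intervalIntegrable_truncDivCosPow_mul_cos_pow hk hτ hpos hmax).mono_set ?_
      |>.congr ?_
    · rw [uIcc_of_le hτ₀.le, uIcc_of_le pi_div_two_pos.le]; exact Icc_subset_Icc le_rfl hτ
    · intro t ht
      rw [uIoc_of_le hτ₀.le] at ht
      exact hf.truncDivCosPow_mul_cos_pow hk hτ hpos hmax (Ioc_subset_Icc_self ht)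
  exact intervalIntegral_pos_of_pos_on hint
    (fun s hs => hf.pos_of_mem_Ioo hk (hτ.trans_lt (by linarith [pi_pos])) hpos hf0 hs) hτ₀

end MaxAtZero

/-- A nonzero non-negative `sin^k`-concave function on `[0,τ]` attaining its maximum at `0`
satisfies `τ ≤ π/2` and the integral-ratio comparison with `cos^k`. -/
theorem stmt_9 (k : ℕ) (hk : 0 < k) (τ : ℝ) (hτ : 0 < τ) (hτπ : τ < Real.pi)
    (f : ℝ → ℝ) (hpos : ∀ x ∈ Set.Icc 0 τ, 0 ≤ f x)
    (hne : ∃ x ∈ Set.Icc 0 τ, f x ≠ 0)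
    (hconc : SinPowConcaveOn k (Set.Icc 0 τ) f)
    (hmax : ∀ x ∈ Set.Icc 0 τ, f x ≤ f 0) :
    τ ≤ Real.pi / 2 ∧
      ∀ ε : ℝ, 0 ≤ ε → ε ≤ Real.pi / 2 →
        (∫ t in (0 : ℝ)..(min ε τ), f t) / (∫ t in (0 : ℝ)..τ, f t) ≥
          (∫ t in (0 : ℝ)..ε, Real.cos t ^ k) / (∫ t in (0 : ℝ)..(Real.pi / 2), Real.cos t ^ k) := by
  have hf0 : 0 < f 0 := by
    obtain ⟨x, hx, hfx⟩ := hne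
    exact ((hpos x hx).lt_of_ne' hfx).trans_le (hmax x hx)
  have hτ₂ := hconc.le_pi_div_two hτπ hpos hmax hf0
  refine ⟨hτ₂, fun ε hε₀ hε => ?_⟩
  have hcos₀ : ∀ x ∈ Icc 0 (π / 2), 0 ≤ cos x ^ k := fun x hx =>
    pow_nonneg (cos_nonneg_of_mem_Icc ⟨by linarith [pi_pos, hx.1], hx.2⟩) k
  have h := integral_mul_le_integral_mul_of_antitoneOn (w := fun t => cos t ^ k) hε₀ hε
    (hconc.antitoneOn_truncDivCosPow hk.ne' hτ₂ hpos hmax) (by fun_prop) hcos₀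
  rw [hconc.integral_truncDivCosPow_mul_cos_pow hk.ne' hτ.le hτ₂ hpos hmax ⟨hε₀, hε⟩,
    hconc.integral_truncDivCosPow_mul_cos_pow hk.ne' hτ.le hτ₂ hpos hmax
      ⟨pi_div_two_pos.le, le_rfl⟩, min_eq_right hτ₂] at h
  have hcos : 0 < ∫ t in (0 : ℝ)..(π / 2), cos t ^ k :=
    intervalIntegral_pos_of_pos_on
      ((by fun_prop : Continuous fun t => cos t ^ k).intervalIntegrable _ _)
      (fun x hx => pow_pos (cos_pos_of_mem_Ioo ⟨by linarith [hx.1, pi_pos], hx.2⟩) k)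
      pi_div_two_pos
  rwa [ge_iff_le, div_le_div_iff₀ hcos (hconc.integral_pos hk.ne' hτ hτ₂ hpos hmax hf0)]
end

section
/- If f is a sin-concave function defined on an interval [-a,a] (a < π) containing 0 and f attains its maximum at 0, then g(t) = f(|t|) is also sin-concave on [-a,a]. -/
/-! Only the values of `f` on `[0, a]` matter, and by the symmetry `t ↦ -t` it suffices to check
the three-point inequality of `f |·|` at `x < y < z` with `0 ≤ y`. Letting `u → 0⁺` in the
three-point inequality of `f` at `0 < u < v`, together with `f u ≤ f 0`, gives
`f v ≤ cos v * f 0`; hence `sin z * f (-x) + sin (-x) * f z ≤ sin (z - x) * f 0` for `x ≤ 0 ≤ z`,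
which is the three-point inequality of `f |·|` at `x < 0 < z`. Combining it with the one of `f`
at `0 ≤ y ≤ z` gives the case `z - x < π`. When `z - x > π` the denominator `sin (z - x)` is
negative, and the only coefficient that can become positive is controlled by the monotonicity
of `f t / sin t` on `(0, a]`. -/

open Real

/-- `f` is `sin`-concave on `I`. -/
def SinConcaveOn (I : Set ℝ) (f : ℝ → ℝ) : Prop :=
  ∀ x₁ ∈ I, ∀ x₂ ∈ I, ∀ α ∈ Set.Ioo (0 : ℝ) 1,
    f (α * x₁ + (1 - α) * x₂) ≥
      (Real.sin (α * |x₂ - x₁|) / Real.sin |x₂ - x₁|) * f x₁ +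
      (Real.sin ((1 - α) * |x₂ - x₁|) / Real.sin |x₂ - x₁|) * f x₂

open Set Filter Topology

theorem sin_mul_tan_half {u : ℝ} (hu : cos (u / 2) ≠ 0) : sin u * tan (u / 2) = 1 - cos u := by
  have hsin := sin_two_mul (u / 2)
  have hcos := cos_two_mul (u / 2)
  rw [mul_div_cancel₀ u two_ne_zero] at hsin hcos
  rw [tan_eq_sin_div_cos, hsin, hcos]
  field_simp
  linear_combination 2 * sin_sq_add_cos_sq (u / 2)

theorem sinConcaveOn_of_forall_mem_Ioo {I : Set ℝ} {f : ℝ → ℝ} (h₀ : ∀ x ∈ I, 0 ≤ f x)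
    (h : ∀ x ∈ I, ∀ z ∈ I, ∀ y ∈ Ioo x z,
      sin (z - y) / sin (z - x) * f x + sin (y - x) / sin (z - x) * f z ≤ f y) :
    SinConcaveOn I f := by
  intro x₁ hx₁ x₂ hx₂ α ⟨hα0, hα1⟩
  rcases lt_trichotomy x₁ x₂ with hlt | rfl | hgt
  · have h' := h x₁ hx₁ x₂ hx₂ (α * x₁ + (1 - α) * x₂) ⟨by nlinarith, by nlinarith⟩
    rw [abs_of_pos (sub_pos.2 hlt)]
    rwa [show x₂ - (α * x₁ + (1 - α) * x₂) = α * (x₂ - x₁) by ring,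
      show α * x₁ + (1 - α) * x₂ - x₁ = (1 - α) * (x₂ - x₁) by ring] at h'
  -- both coefficients are `sin 0 / sin 0 = 0`
  · simpa [← add_mul] using h₀ x₁ hx₁
  · have h' := h x₂ hx₂ x₁ hx₁ (α * x₁ + (1 - α) * x₂) ⟨by nlinarith, by nlinarith⟩
    rw [abs_of_neg (sub_neg.2 hgt), neg_sub]
    rw [show x₁ - (α * x₁ + (1 - α) * x₂) = (1 - α) * (x₁ - x₂) by ring,
      show α * x₁ + (1 - α) * x₂ - x₂ = α * (x₁ - x₂) by ring] at h'
    linarith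

namespace SinConcaveOn

variable {I : Set ℝ} {a : ℝ} {f : ℝ → ℝ}

theorem nonneg (hf : SinConcaveOn I f) {x : ℝ} (hx : x ∈ I) : 0 ≤ f x := by
  simpa [← add_mul] using hf x hx x hx (1 / 2) ⟨by norm_num, by norm_num⟩

theorem mono {J : Set ℝ} (hf : SinConcaveOn I f) (hJI : J ⊆ I) : SinConcaveOn J f :=
  fun x₁ hx₁ x₂ hx₂ => hf x₁ (hJI hx₁) x₂ (hJI hx₂)

theorem le_of_mem_Ioo (hf : SinConcaveOn I f) {x y z : ℝ} (hx : x ∈ I) (hz : z ∈ I)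
    (hy : y ∈ Ioo x z) :
    sin (z - y) / sin (z - x) * f x + sin (y - x) / sin (z - x) * f z ≤ f y := by
  obtain ⟨hxy, hyz⟩ := hy
  have hxz : 0 < z - x := by linarith
  have h := hf x hx z hz ((z - y) / (z - x))
    ⟨div_pos (by linarith) hxz, (div_lt_one hxz).2 (by linarith)⟩
  rwa [abs_of_pos hxz, div_mul_cancel₀ _ hxz.ne',
    show (1 - (z - y) / (z - x)) * (z - x) = y - x by field_simp; ring,
    show (z - y) / (z - x) * x + (1 - (z - y) / (z - x)) * z = y by field_simp; ring] at h

theorem sin_mul_add_sin_mul_le (hf : SinConcaveOn I f) {x y z : ℝ} (hx : x ∈ I) (hz : z ∈ I)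
    (hy : y ∈ Icc x z) (hxz : z - x < π) :
    sin (z - y) * f x + sin (y - x) * f z ≤ sin (z - x) * f y := by
  rcases hy.1.eq_or_lt with rfl | hxy
  · simp
  rcases hy.2.eq_or_lt with rfl | hyz
  · simp
  have hs : 0 < sin (z - x) := sin_pos_of_pos_of_lt_pi (by linarith) hxz
  have h := hf.le_of_mem_Ioo hx hz ⟨hxy, hyz⟩
  rw [div_mul_eq_mul_div, div_mul_eq_mul_div, ← add_div, div_le_iff₀ hs] at h
  linarith

theorem sin_mul_le_sin_mul (hf : SinConcaveOn (Icc 0 a) f) (haπ : a < π) {u v : ℝ}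
    (hu : 0 ≤ u) (huv : u ≤ v) (hva : v ≤ a) : sin u * f v ≤ sin v * f u := by
  have hchord := hf.sin_mul_add_sin_mul_le (left_mem_Icc.2 (hu.trans (huv.trans hva)))
    ⟨hu.trans huv, hva⟩ ⟨hu, huv⟩ (by linarith)
  have hf0 := hf.nonneg (left_mem_Icc.2 (hu.trans (huv.trans hva)))
  have hsin : 0 ≤ sin (v - u) := sin_nonneg_of_nonneg_of_le_pi (by linarith) (by linarith)
  simp only [sub_zero] at hchord
  linarith [mul_nonneg hsin hf0]

theorem le_cos_mul (hf : SinConcaveOn (Icc 0 a) f) (haπ : a < π)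
    (hmax : ∀ x ∈ Icc 0 a, f x ≤ f 0) {v : ℝ} (hv : v ∈ Icc 0 a) : f v ≤ cos v * f 0 := by
  rcases hv.1.eq_or_lt with rfl | hv0
  · simp
  have hbound : ∀ u ∈ Ioo 0 v, f v ≤ cos v * f 0 + sin v * f 0 * tan (u / 2) := by
    rintro u ⟨hu0, huv⟩
    have hsu : 0 < sin u := sin_pos_of_pos_of_lt_pi hu0 (by linarith [hv.2])
    have hsv : 0 ≤ sin v := sin_nonneg_of_nonneg_of_le_pi hv.1 (by linarith [hv.2])
    have hchord := hf.sin_mul_add_sin_mul_le (left_mem_Icc.2 (hv0.le.trans hv.2)) hv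
      ⟨hu0.le, huv.le⟩ (by linarith [hv.2])
    simp only [sub_zero] at hchord
    have hfu := hmax u ⟨hu0.le, by linarith [hv.2]⟩
    have hhalf : sin u * tan (u / 2) = 1 - cos u :=
      sin_mul_tan_half (cos_pos_of_mem_Ioo ⟨by linarith [pi_pos], by linarith [hv.2]⟩).ne'
    refine le_of_mul_le_mul_left ?_ hsu
    calc sin u * f v ≤ sin v * f u - sin (v - u) * f 0 := by linarith
      _ ≤ sin v * f 0 - sin (v - u) * f 0 := by gcongr
      _ = sin u * (cos v * f 0 + sin v * f 0 * tan (u / 2)) := by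
        rw [sin_sub]; linear_combination (-(sin v * f 0)) * hhalf
  have hlim : Tendsto (fun u => cos v * f 0 + sin v * f 0 * tan (u / 2)) (𝓝[>] 0)
      (𝓝 (cos v * f 0)) := by
    have hcont : ContinuousAt (fun u => cos v * f 0 + sin v * f 0 * tan (u / 2)) 0 :=
      continuousAt_const.add (continuousAt_const.mul
        ((continuousAt_tan.2 (by simp)).comp (continuousAt_id.div_const 2)))
    simpa using hcont.tendsto.mono_left nhdsWithin_le_nhds
  exact ge_of_tendsto hlim (eventually_of_mem (Ioo_mem_nhdsGT hv0) hbound)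

theorem sin_mul_apply_neg_add_sin_mul_le (hf : SinConcaveOn (Icc 0 a) f) (haπ : a < π)
    (hmax : ∀ x ∈ Icc 0 a, f x ≤ f 0) {x y z : ℝ} (hx : -a ≤ x) (hx0 : x ≤ 0) (hy : 0 ≤ y)
    (hyz : y ≤ z) (hz : z ≤ a) (hz0 : 0 < z) (hxz : z - x ≤ π) :
    sin (z - y) * f (-x) + sin (y - x) * f z ≤ sin (z - x) * f y := by
  have hsz : 0 < sin z := sin_pos_of_pos_of_lt_pi hz0 (by linarith)
  have hszy : 0 ≤ sin (z - y) := sin_nonneg_of_nonneg_of_le_pi (by linarith) (by linarith)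
  have hszx : 0 ≤ sin (z - x) := sin_nonneg_of_nonneg_of_le_pi (by linarith) hxz
  have hchord : sin (z - y) * f 0 + sin y * f z ≤ sin z * f y := by
    simpa using hf.sin_mul_add_sin_mul_le (left_mem_Icc.2 (hz0.le.trans hz)) ⟨hz0.le, hz⟩
      ⟨hy, hyz⟩ (by linarith)
  have hcentre : sin z * f (-x) + sin (-x) * f z ≤ sin (z - x) * f 0 := by
    have hsx : 0 ≤ sin (-x) := sin_nonneg_of_nonneg_of_le_pi (by linarith) (by linarith)
    have hfx := hf.le_cos_mul haπ hmax ⟨neg_nonneg.2 hx0, by linarith⟩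
    have hfz := hf.le_cos_mul haπ hmax ⟨hz0.le, hz⟩
    calc sin z * f (-x) + sin (-x) * f z
        ≤ sin z * (cos (-x) * f 0) + sin (-x) * (cos z * f 0) := by gcongr
      _ = sin (z - x) * f 0 := by rw [sin_sub, cos_neg, sin_neg]; ring
  refine le_of_mul_le_mul_left ?_ hsz
  calc sin z * (sin (z - y) * f (-x) + sin (y - x) * f z)
      = sin (z - y) * (sin z * f (-x) + sin (-x) * f z) + sin (z - x) * (sin y * f z) := by
        rw [sin_sub, sin_sub, sin_sub, sin_neg]; ring
    _ ≤ sin (z - y) * (sin (z - x) * f 0) + sin (z - x) * (sin y * f z) := by gcongr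
    _ = sin (z - x) * (sin (z - y) * f 0 + sin y * f z) := by ring
    _ ≤ sin (z - x) * (sin z * f y) := by gcongr
    _ = sin z * (sin (z - x) * f y) := by ring

theorem sin_add_mul_le_sin_add_mul (hf : SinConcaveOn (Icc 0 a) f) (haπ : a < π)
    {c y z : ℝ} (hc : c ≤ a) (hy : 0 < y) (hyz : y ≤ z) (hz : z ≤ a) (hπ : π ≤ y + c) :
    sin (z + c) * f y ≤ sin (y + c) * f z := by
  have hsy : 0 < sin y := sin_pos_of_pos_of_lt_pi hy (by linarith)
  have hsc : 0 ≤ sin c := sin_nonneg_of_nonneg_of_le_pi (by linarith) (by linarith)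
  have hszy : 0 ≤ sin (z - y) := sin_nonneg_of_nonneg_of_le_pi (by linarith) (by linarith)
  have hsyc : sin (y + c) ≤ 0 := by
    rw [← sin_sub_two_pi]
    exact sin_nonpos_of_nonpos_of_neg_pi_le (by linarith) (by linarith)
  have hfy : 0 ≤ f y := hf.nonneg ⟨hy.le, by linarith⟩
  refine le_of_mul_le_mul_left ?_ hsy
  calc sin y * (sin (z + c) * f y)
      = sin (y + c) * (sin z * f y) - sin c * sin (z - y) * f y := by
        rw [sin_add, sin_add, sin_sub]; ring
    _ ≤ sin (y + c) * (sin z * f y) := sub_le_self _ (mul_nonneg (mul_nonneg hsc hszy) hfy)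
    _ ≤ sin (y + c) * (sin y * f z) :=
        mul_le_mul_of_nonpos_left (hf.sin_mul_le_sin_mul haπ hy.le hyz hz) hsyc
    _ = sin y * (sin (y + c) * f z) := by ring

theorem comp_abs_le_of_nonneg (hf : SinConcaveOn (Icc 0 a) f) (haπ : a < π)
    (hmax : ∀ x ∈ Icc 0 a, f x ≤ f 0) {x y z : ℝ} (hx : -a ≤ x) (hz : z ≤ a)
    (hy : y ∈ Ioo x z) (hy0 : 0 ≤ y) :
    sin (z - y) / sin (z - x) * f |x| + sin (y - x) / sin (z - x) * f |z| ≤ f |y| := by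
  obtain ⟨hxy, hyz⟩ := hy
  rw [abs_of_nonneg hy0, abs_of_pos (hy0.trans_lt hyz)]
  rcases le_or_gt 0 x with hx0 | hx0
  · rw [abs_of_nonneg hx0]
    exact hf.le_of_mem_Ioo ⟨hx0, by linarith⟩ ⟨by linarith, hz⟩ ⟨hxy, hyz⟩
  rw [abs_of_neg hx0]
  have hfx : 0 ≤ f (-x) := hf.nonneg ⟨by linarith, by linarith⟩
  have hfy : 0 ≤ f y := hf.nonneg ⟨hy0, by linarith⟩
  have hfz : 0 ≤ f z := hf.nonneg ⟨by linarith, hz⟩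
  rcases lt_trichotomy (z - x) π with hlt | heq | hgt
  · have hs : 0 < sin (z - x) := sin_pos_of_pos_of_lt_pi (by linarith) hlt
    rw [div_mul_eq_mul_div, div_mul_eq_mul_div, ← add_div, div_le_iff₀ hs, mul_comm (f y)]
    exact hf.sin_mul_apply_neg_add_sin_mul_le haπ hmax hx hx0.le hy0 hyz.le hz (by linarith)
      hlt.le
  -- both coefficients are `_ / sin π = 0`
  · rwa [heq, sin_pi, div_zero, div_zero, zero_mul, zero_mul, add_zero]
  · have hs : sin (z - x) < 0 := by
      rw [← sin_sub_two_pi]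
      exact sin_neg_of_neg_of_neg_pi_lt (by linarith) (by linarith)
    have hfirst : sin (z - y) / sin (z - x) * f (-x) ≤ 0 :=
      mul_nonpos_of_nonpos_of_nonneg (div_nonpos_of_nonneg_of_nonpos
        (sin_nonneg_of_nonneg_of_le_pi (by linarith) (by linarith)) hs.le) hfx
    have hsecond : sin (y - x) / sin (z - x) * f z ≤ f y := by
      rcases le_or_gt (y - x) π with hyx | hyx
      · exact (mul_nonpos_of_nonpos_of_nonneg (div_nonpos_of_nonneg_of_nonpos
          (sin_nonneg_of_nonneg_of_le_pi (by linarith) hyx) hs.le) hfz).trans hfy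
      · rw [div_mul_eq_mul_div, div_le_iff_of_neg hs, mul_comm (f y)]
        simpa [← sub_eq_add_neg] using hf.sin_add_mul_le_sin_add_mul haπ (c := -x)
          (by linarith) (by linarith) hyz.le hz (by linarith)
    linarith

theorem comp_abs (hf : SinConcaveOn (Icc 0 a) f) (haπ : a < π)
    (hmax : ∀ x ∈ Icc 0 a, f x ≤ f 0) : SinConcaveOn (Icc (-a) a) (fun t => f |t|) := by
  refine sinConcaveOn_of_forall_mem_Ioo (fun x hx => hf.nonneg ⟨abs_nonneg x, abs_le.2 hx⟩) ?_
  intro x hx z hz y hy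
  rcases le_or_gt 0 y with hy0 | hy0
  · exact hf.comp_abs_le_of_nonneg haπ hmax hx.1 hz.2 hy hy0
  · have h := hf.comp_abs_le_of_nonneg haπ hmax (x := -z) (y := -y) (z := -x)
      (by linarith [hz.2]) (by linarith [hx.1]) ⟨neg_lt_neg hy.2, neg_lt_neg hy.1⟩ (by linarith)
    simp only [abs_neg, neg_sub_neg] at h
    linarith

end SinConcaveOn

theorem stmt_11_general (a : ℝ) (haπ : a < Real.pi)
    (f : ℝ → ℝ) (hconc : SinConcaveOn (Set.Icc (-a) a) f)
    (hmax : ∀ x ∈ Set.Icc (-a) a, f x ≤ f 0) :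
    SinConcaveOn (Set.Icc (-a) a) (fun t => f |t|) := by
  have hsub : Icc 0 a ⊆ Icc (-a) a := fun x hx => ⟨by linarith [hx.1, hx.2], hx.2⟩
  exact (hconc.mono hsub).comp_abs haπ fun x hx => hmax x (hsub hx)

/-- If `f` is `sin`-concave on `[-a,a]` (with `a < π`) and attains its maximum at `0`,
then `g(t) = f(|t|)` is also `sin`-concave on `[-a,a]`. -/
theorem stmt_11 (a : ℝ) (ha : 0 < a) (haπ : a < Real.pi)
    (f : ℝ → ℝ) (hconc : SinConcaveOn (Set.Icc (-a) a) f)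
    (hmax : ∀ x ∈ Set.Icc (-a) a, f x ≤ f 0) :
    SinConcaveOn (Set.Icc (-a) a) (fun t => f |t|) :=
  stmt_11_general a haπ f hconc hmax
end

section
/- Given two continuous functions G₁, G₂ on the sphere S^n with ∫_{S^n} G_i dμ > 0 for i = 1,2 (μ the Riemannian volume), there exists a hemisphere H such that ∫_H G_i dμ > 0 for both i = 1,2. -/
/-!
Write `F_i v = ∫_{⟪v, u⟫ > 0} G_i`. Since equators are null, `F_i v + F_i (-v) = ∫ G_i > 0`,
and dominated convergence makes `F_i` continuous. If no `v` had `F₁ v > 0` and `F₂ v > 0`,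
then `F₁ - F₂` would vanish nowhere on the sphere, yet it takes opposite signs at some
pair `v`, `-v`; since `Sⁿ` is connected for `n ≥ 1`, the intermediate value theorem rules this
out.
-/

open MeasureTheory Metric Set Filter Topology
open scoped RealInnerProductSpace Pointwise

theorem exists_pos_and_pos_of_add_comp_pos {X : Type*} [TopologicalSpace X] [ConnectedSpace X]
    {f g : X → ℝ} (hf : Continuous f) (hg : Continuous g) (σ : X → X)
    (hfσ : ∀ x, 0 < f x + f (σ x)) (hgσ : ∀ x, 0 < g x + g (σ x)) :
    ∃ x, 0 < f x ∧ 0 < g x := by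
  obtain ⟨x, hx⟩ : ∃ x, 0 < f x := by
    obtain ⟨x₀⟩ : Nonempty X := inferInstance
    by_contra! h
    linarith [hfσ x₀, h x₀, h (σ x₀)]
  by_contra! h
  have hσx : f (σ x) < g (σ x) := by
    by_contra! hle
    linarith [hgσ x, h x hx, h (σ x) (by linarith [hgσ x, h x hx])]
  -- `f - g` changes sign between `σ x` and `x`, so `f = g` somewhere, which is impossible.
  obtain ⟨y, hy⟩ : ∃ y, f y - g y = 0 :=
    intermediate_value_univ (f := fun y => f y - g y) (σ x) x (hf.sub hg)
      ⟨by linarith, by linarith [h x hx]⟩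
  rcases le_or_gt (f y) 0 with hfy | hfy
  · linarith [hfσ y, hgσ y, h (σ y) (by linarith [hfσ y])]
  · linarith [h y hfy]

namespace InnerProductSpace

variable {E : Type*} [NormedAddCommGroup E] [InnerProductSpace ℝ E]

def hemisphere (v : E) : Set (sphere (0 : E) 1) := {u | 0 < ⟪v, (u : E)⟫}

theorem mem_hemisphere {v : E} {u : sphere (0 : E) 1} : u ∈ hemisphere v ↔ 0 < ⟪v, (u : E)⟫ :=
  Iff.rfl

theorem isOpen_hemisphere (v : E) : IsOpen (hemisphere v) :=
  isOpen_lt continuous_const (continuous_const.inner continuous_subtype_val)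

theorem hemisphere_neg (v : E) : hemisphere (-v) = {u : sphere (0 : E) 1 | ⟪v, (u : E)⟫ < 0} := by
  ext u
  simp only [mem_hemisphere, inner_neg_left, neg_pos, mem_ofPred_eq]

theorem eventually_mem_hemisphere_iff {v₀ : E} {u : sphere (0 : E) 1} (hu : ⟪v₀, (u : E)⟫ ≠ 0) :
    ∀ᶠ v in 𝓝 v₀, (u ∈ hemisphere v ↔ u ∈ hemisphere v₀) := by
  have hc : Continuous fun v : E => ⟪v, (u : E)⟫ := continuous_id.inner continuous_const
  rcases hu.lt_or_gt with hneg | hpos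
  · filter_upwards [hc.continuousAt.eventually_lt continuousAt_const hneg] with v hv
    simp only [mem_hemisphere]
    constructor <;> intro h <;> linarith
  · filter_upwards [continuousAt_const.eventually_lt hc.continuousAt hpos] with v hv
    simp only [mem_hemisphere]
    constructor <;> intro h <;> linarith

variable [MeasurableSpace E] [BorelSpace E] [FiniteDimensional ℝ E]
  (μ : Measure E) [μ.IsAddHaarMeasure]

theorem toSphere_setOf_mem_submodule {S : Submodule ℝ E} (hS : S ≠ ⊤) :
    μ.toSphere {u | (u : E) ∈ S} = 0 := by
  have hmeas : MeasurableSet {u : sphere (0 : E) 1 | (u : E) ∈ S} :=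
    (S.closed_of_finiteDimensional.preimage continuous_subtype_val).measurableSet
  have hcone :
      Ioo (0 : ℝ) 1 • ((↑) '' {u : sphere (0 : E) 1 | (u : E) ∈ S} : Set E) ⊆ (S : Set E) := by
    rintro _ ⟨r, -, _, ⟨u, hu, rfl⟩, rfl⟩
    exact S.smul_mem r hu
  rw [μ.toSphere_apply' hmeas, measure_mono_null hcone (Measure.addHaar_submodule μ S hS),
    mul_zero]

theorem toSphere_equator {v : E} (hv : v ≠ 0) : μ.toSphere {u | ⟪v, (u : E)⟫ = 0} = 0 := by
  have hS : (ℝ ∙ v)ᗮ ≠ ⊤ := by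
    simpa [Submodule.orthogonal_eq_top_iff] using hv
  simpa [Submodule.mem_orthogonal_singleton_iff_inner_right] using toSphere_setOf_mem_submodule μ hS

section Integrable

variable {μ} {G : sphere (0 : E) 1 → ℝ} (hG : Integrable G μ.toSphere)
include hG

theorem continuousAt_integral_hemisphere {v₀ : E} (hv₀ : v₀ ≠ 0) :
    ContinuousAt (fun v => ∫ u in hemisphere v, G u ∂μ.toSphere) v₀ := by
  simp only [← integral_indicator (isOpen_hemisphere _).measurableSet]
  refine continuousAt_of_dominated (bound := fun u => ‖G u‖)
    (.of_forall fun v => hG.aestronglyMeasurable.indicator (isOpen_hemisphere v).measurableSet)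
    (.of_forall fun v => .of_forall fun u => norm_indicator_le_norm_self G u) hG.norm ?_
  -- off the null equator of `v₀`, the integrand is locally constant in `v`
  filter_upwards [measure_eq_zero_iff_ae_notMem.1 (toSphere_equator μ hv₀)] with u hu
  refine (continuousAt_const (y := (hemisphere v₀).indicator G u)).congr ?_
  filter_upwards [eventually_mem_hemisphere_iff hu] with v hv
  by_cases h : u ∈ hemisphere v₀
  · rw [indicator_of_mem h, indicator_of_mem (hv.2 h)]
  · rw [indicator_of_notMem h, indicator_of_notMem (mt hv.1 h)]

theorem integral_hemisphere_add_integral_hemisphere_neg {v : E} (hv : v ≠ 0) :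
    ∫ u in hemisphere v, G u ∂μ.toSphere + ∫ u in hemisphere (-v), G u ∂μ.toSphere =
      ∫ u, G u ∂μ.toSphere := by
  have hcompl : ((hemisphere v)ᶜ : Set (sphere (0 : E) 1)) =ᵐ[μ.toSphere] hemisphere (-v) := by
    rw [hemisphere_neg]
    refine ae_eq_set.2 ⟨measure_mono_null ?_ (toSphere_equator μ hv), ?_⟩
    · rintro u ⟨h₁, h₂⟩
      simp only [mem_compl_iff, mem_hemisphere, mem_ofPred_eq, not_lt] at h₁ h₂ ⊢
      exact le_antisymm h₁ h₂
    · rw [sdiff_eq_empty.2, measure_empty]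
      intro u hu
      simp only [mem_compl_iff, mem_hemisphere, mem_ofPred_eq, not_lt] at hu ⊢
      exact hu.le
  rw [← setIntegral_congr_set hcompl, integral_add_compl (isOpen_hemisphere v).measurableSet hG]

theorem continuous_integral_hemisphere :
    Continuous fun v : sphere (0 : E) 1 => ∫ u in hemisphere (v : E), G u ∂μ.toSphere :=
  continuous_iff_continuousAt.2 fun v =>
    (continuousAt_integral_hemisphere hG (ne_zero_of_mem_unit_sphere v)).comp
      continuous_subtype_val.continuousAt

end Integrable

variable {μ} {G₁ G₂ : sphere (0 : E) 1 → ℝ}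

theorem exists_integral_hemisphere_pos_and_pos (hE : 1 < Module.finrank ℝ E)
    (hG₁ : Integrable G₁ μ.toSphere) (hG₂ : Integrable G₂ μ.toSphere)
    (h₁ : 0 < ∫ u, G₁ u ∂μ.toSphere) (h₂ : 0 < ∫ u, G₂ u ∂μ.toSphere) :
    ∃ v : sphere (0 : E) 1, 0 < ∫ u in hemisphere (v : E), G₁ u ∂μ.toSphere ∧
      0 < ∫ u in hemisphere (v : E), G₂ u ∂μ.toSphere := by
  have : ConnectedSpace (sphere (0 : E) 1) := by
    refine Subtype.connectedSpace (isConnected_sphere ?_ 0 zero_le_one)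
    rw [← Module.finrank_eq_rank]
    exact_mod_cast hE
  refine exists_pos_and_pos_of_add_comp_pos (continuous_integral_hemisphere hG₁)
    (continuous_integral_hemisphere hG₂) Neg.neg (fun v => ?_) (fun v => ?_)
  · rwa [coe_neg_sphere, integral_hemisphere_add_integral_hemisphere_neg hG₁
      (ne_zero_of_mem_unit_sphere v)]
  · rwa [coe_neg_sphere, integral_hemisphere_add_integral_hemisphere_neg hG₂
      (ne_zero_of_mem_unit_sphere v)]

end InnerProductSpace

/-- If two continuous functions on the sphere `Sⁿ` have positive total integral, then some
hemisphere gives positive integral to both simultaneously. -/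
theorem stmt_14 (n : ℕ) (hn : 1 ≤ n)
    (G₁ G₂ : sphere (0 : EuclideanSpace ℝ (Fin (n + 1))) 1 → ℝ)
    (hG₁ : Continuous G₁) (hG₂ : Continuous G₂)
    (h₁ : 0 < ∫ u, G₁ u ∂((volume : Measure (EuclideanSpace ℝ (Fin (n + 1)))).toSphere))
    (h₂ : 0 < ∫ u, G₂ u ∂((volume : Measure (EuclideanSpace ℝ (Fin (n + 1)))).toSphere)) :
    ∃ v : sphere (0 : EuclideanSpace ℝ (Fin (n + 1))) 1,
      (0 < ∫ u in {u : sphere (0 : EuclideanSpace ℝ (Fin (n + 1))) 1 |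
          0 < ⟪(v : EuclideanSpace ℝ (Fin (n + 1))), (u : EuclideanSpace ℝ (Fin (n + 1)))⟫},
          G₁ u ∂((volume : Measure (EuclideanSpace ℝ (Fin (n + 1)))).toSphere)) ∧
      (0 < ∫ u in {u : sphere (0 : EuclideanSpace ℝ (Fin (n + 1))) 1 |
          0 < ⟪(v : EuclideanSpace ℝ (Fin (n + 1))), (u : EuclideanSpace ℝ (Fin (n + 1)))⟫},
          G₂ u ∂((volume : Measure (EuclideanSpace ℝ (Fin (n + 1)))).toSphere)) :=
  InnerProductSpace.exists_integral_hemisphere_pos_and_pos (by rw [finrank_euclideanSpace_fin]; omega)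
    (hG₁.integrable_of_hasCompactSupport (.of_compactSpace _))
    (hG₂.integrable_of_hasCompactSupport (.of_compactSpace _)) h₁ h₂
end

section
/- Let S be an origin-symmetric convex body in ℝ² and U(S) the result of Steiner symmetrization of S with respect to the x-axis. Then for the measure μ₂ with density |y|^{n-1} dx dy (n ≥ 1), μ₂(S) ≥ μ₂(U(S)). -/
/-!
Both measures are computed by Fubini, slice by slice along the `x`-axis. The density
`|y|^{n-1}` is a nondecreasing function of `|y|`, so on a line the symmetric interval `I`
carries the least weight among measurable sets `A` of the same length: the part of `I` outside
`A` has the same length as the part of `A` outside `I`, and the density is at most `c^{n-1}` on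
the former and at least `c^{n-1}` on the latter, where `[-c, c] = I`.
-/

open MeasureTheory

/-- Steiner symmetrization with respect to the `x`-axis: each vertical slice of `S` is
replaced by the symmetric closed interval of the same length. -/
noncomputable def steiner (S : Set (ℝ × ℝ)) : Set (ℝ × ℝ) :=
  {p | (∃ y : ℝ, (p.1, y) ∈ S) ∧
    |p.2| ≤ (volume {y : ℝ | (p.1, y) ∈ S}).toReal / 2}

open Set
open scoped ENNReal

theorem setLIntegral_le_setLIntegral_of_measure_eq {α : Type*} [MeasurableSpace α]
    {μ : Measure α} {g : α → ℝ≥0∞} {I A : Set α} (t : ℝ≥0∞)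
    (hI : MeasurableSet I) (hA : MeasurableSet A) (hμ : μ I = μ A) (hfin : μ I ≠ ∞)
    (hg_le : ∀ y ∈ I, g y ≤ t) (hle_g : ∀ y ∉ I, t ≤ g y) :
    ∫⁻ y in I, g y ∂μ ≤ ∫⁻ y in A, g y ∂μ := by
  have hdiff : μ (I \ A) = μ (A \ I) :=
    measure_sdiff_symm hI.nullMeasurableSet hA.nullMeasurableSet hμ
      (measure_ne_top_of_subset inter_subset_left hfin)
  calc ∫⁻ y in I, g y ∂μ = ∫⁻ y in I ∩ A, g y ∂μ + ∫⁻ y in I \ A, g y ∂μ :=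
        (lintegral_inter_add_sdiff _ I hA).symm
    _ ≤ ∫⁻ y in A ∩ I, g y ∂μ + ∫⁻ y in A \ I, g y ∂μ := by
        rw [inter_comm]
        refine add_le_add_right ?_ _
        calc ∫⁻ y in I \ A, g y ∂μ ≤ ∫⁻ _ in I \ A, t ∂μ :=
              setLIntegral_mono' (hI.diff hA) fun y hy => hg_le y hy.1
          _ = ∫⁻ _ in A \ I, t ∂μ := by rw [setLIntegral_const, setLIntegral_const, hdiff]
          _ ≤ ∫⁻ y in A \ I, g y ∂μ :=
              setLIntegral_mono' (hA.diff hI) fun y hy => hle_g y hy.2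
    _ = ∫⁻ y in A, g y ∂μ := lintegral_inter_add_sdiff _ A hI

theorem setLIntegral_abs_le_half_volume_le {g : ℝ → ℝ≥0∞} (hg : ∀ y z, |y| ≤ |z| → g y ≤ g z)
    {A : Set ℝ} (hA : MeasurableSet A) :
    ∫⁻ y in {y | |y| ≤ (volume A).toReal / 2}, g y ≤ ∫⁻ y in A, g y := by
  set c := (volume A).toReal / 2
  have hc : 0 ≤ c := by positivity
  have hIcc : {y : ℝ | |y| ≤ c} = Icc (-c) c := by ext y; simp [abs_le]
  by_cases hA_top : volume A = ∞
  · -- `ENNReal.toReal ∞ = 0`, so the interval degenerates to `{0}`.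
    have hc0 : c = 0 := by simp [c, hA_top]
    rw [hIcc, hc0, setLIntegral_measure_zero _ _ (by simp)]
    exact bot_le
  have hvol : volume (Icc (-c) c) = volume A := by
    rw [Real.volume_Icc, show c - -c = (volume A).toReal by ring, ENNReal.ofReal_toReal hA_top]
  rw [hIcc]
  refine setLIntegral_le_setLIntegral_of_measure_eq (g c) measurableSet_Icc hA hvol
    (hvol ▸ hA_top) (fun y hy => hg y c ?_) (fun y hy => hg c y ?_)
  · rwa [abs_of_nonneg hc, abs_le]
  · rw [abs_of_nonneg hc]
    exact le_of_lt (not_le.mp fun h => hy (abs_le.mp h))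

theorem preimage_mk_steiner {S : Set (ℝ × ℝ)} {x : ℝ} (hx : ∃ y, (x, y) ∈ S) :
    Prod.mk x ⁻¹' steiner S = {y | |y| ≤ (volume (Prod.mk x ⁻¹' S)).toReal / 2} := by
  ext y
  simp [steiner, hx, preimage]

theorem preimage_mk_steiner_of_not_exists {S : Set (ℝ × ℝ)} {x : ℝ} (hx : ¬ ∃ y, (x, y) ∈ S) :
    Prod.mk x ⁻¹' steiner S = ∅ := by
  ext y
  simp [steiner, hx]

theorem measurableSet_steiner {S : Set (ℝ × ℝ)} (hS : MeasurableSet S)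
    (hS_fst : MeasurableSet (Prod.fst '' S)) : MeasurableSet (steiner S) := by
  have hproj : {p : ℝ × ℝ | ∃ y, (p.1, y) ∈ S} = Prod.fst ⁻¹' (Prod.fst '' S) := by
    ext p
    simp
  have hslice : Measurable fun x : ℝ => volume (Prod.mk x ⁻¹' S) :=
    measurable_measure_prodMk_left hS
  exact (hproj ▸ hS_fst.preimage measurable_fst).inter
    (measurableSet_le measurable_snd.norm
      ((hslice.comp measurable_fst).ennreal_toReal.div_const 2))

theorem withDensity_snd_steiner_le {g : ℝ → ℝ≥0∞} (hg_meas : Measurable g)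
    (hg : ∀ y z, |y| ≤ |z| → g y ≤ g z) {S : Set (ℝ × ℝ)} (hS : MeasurableSet S)
    (hS_fst : MeasurableSet (Prod.fst '' S)) :
    (volume.withDensity fun p : ℝ × ℝ => g p.2) (steiner S) ≤
      (volume.withDensity fun p : ℝ × ℝ => g p.2) S := by
  rw [Measure.volume_eq_prod, ← prod_withDensity_right hg_meas,
    Measure.prod_apply (measurableSet_steiner hS hS_fst), Measure.prod_apply hS]
  refine lintegral_mono fun x => ?_
  rw [withDensity_apply', withDensity_apply']
  by_cases hx : ∃ y, (x, y) ∈ S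
  · rw [preimage_mk_steiner hx]
    exact setLIntegral_abs_le_half_volume_le hg (measurable_prodMk_left hS)
  · simp [preimage_mk_steiner_of_not_exists hx]

theorem stmt_19_general (n : ℕ) (S : Set (ℝ × ℝ))
    (hScomp : IsCompact S) :
    (volume.withDensity fun p : ℝ × ℝ => ENNReal.ofReal (|p.2| ^ (n - 1))) (steiner S) ≤
      (volume.withDensity fun p : ℝ × ℝ => ENNReal.ofReal (|p.2| ^ (n - 1))) S :=
  withDensity_snd_steiner_le (measurable_norm.pow_const _).ennreal_ofReal
    (fun _ _ h => ENNReal.ofReal_le_ofReal (pow_le_pow_left₀ (abs_nonneg _) h _))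
    hScomp.isClosed.measurableSet (hScomp.image continuous_fst).isClosed.measurableSet

/-- For the measure `μ₂` with density `|y|^{n-1}`, Steiner symmetrization with respect to
the `x`-axis does not increase the measure of an origin-symmetric convex body. -/
theorem stmt_19 (n : ℕ) (hn : 1 ≤ n) (S : Set (ℝ × ℝ))
    (hSconv : Convex ℝ S) (hScomp : IsCompact S) (hSint : (interior S).Nonempty)
    (hSsymm : ∀ p ∈ S, -p ∈ S) :
    (volume.withDensity fun p : ℝ × ℝ => ENNReal.ofReal (|p.2| ^ (n - 1))) (steiner S) ≤
      (volume.withDensity fun p : ℝ × ℝ => ENNReal.ofReal (|p.2| ^ (n - 1))) S :=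
  stmt_19_general n S hScomp
end
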